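/- arXiv:1411.2232 — 2 statements merged into one kernel-verified Lean document; each statement's English description precedes it below -/
import Mathlib

section
/- Let β ∈ ℝ, and let (x_n)_{n≥1}, (y_n)_{n≥1} be sequences of real numbers with x_n → x ∈ ℝ and y_n → y ∈ ℝ. Then for all sufficiently large n one has 1 + x_n/n^{3/2} > 0 and ∫_0^1 (1 + x_n/n^{3/2})^s ds > 0, and n^{1/2} · ( (n^{-1/2}·y_n + β) / ∫_0^1 (1 + x_n/n^{3/2})^s ds − β ) → y as n → ∞. -/
/-!
For `u > 0` and `s ∈ [0, 1]` the power `u ^ s` lies between `1` and `u`, so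
`|∫₀¹ u ^ s ds - 1| ≤ |u - 1|`. With `u = 1 + xₙ / n^{3/2}` this gives
`√n · |∫₀¹ u ^ s ds - 1| ≤ |xₙ| / n → 0`, and the quantity in question equals
`(yₙ - β √n (∫₀¹ u ^ s ds - 1)) / ∫₀¹ u ^ s ds`, which therefore tends to `lim yₙ`.
-/

open Filter Topology Real

lemma abs_rpow_sub_one_le_abs_sub_one {u s : ℝ} (hu : 0 < u) (hs₀ : 0 ≤ s) (hs₁ : s ≤ 1) :
    |u ^ s - 1| ≤ |u - 1| := by
  rcases le_or_gt 1 u with h | h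
  · have h₁ : 1 ≤ u ^ s := one_le_rpow h hs₀
    have h₂ : u ^ s ≤ u := by simpa using rpow_le_rpow_of_exponent_le h hs₁
    rw [abs_of_nonneg (by linarith), abs_of_nonneg (by linarith)]
    linarith
  · have h₁ : u ^ s ≤ 1 := rpow_le_one hu.le h.le hs₀
    have h₂ : u ≤ u ^ s := by simpa using rpow_le_rpow_of_exponent_ge hu h.le hs₁
    rw [abs_of_nonpos (by linarith), abs_of_nonpos (by linarith)]
    linarith

lemma abs_integral_rpow_sub_one_le {u : ℝ} (hu : 0 < u) :
    |(∫ s in (0 : ℝ)..1, u ^ s) - 1| ≤ |u - 1| := by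
  have hint : IntervalIntegrable (fun s : ℝ => u ^ s) MeasureTheory.volume 0 1 :=
    (continuous_const_rpow hu.ne').intervalIntegrable 0 1
  have hsub : (∫ s in (0 : ℝ)..1, u ^ s) - 1 = ∫ s in (0 : ℝ)..1, (u ^ s - 1) := by
    simp [intervalIntegral.integral_sub hint intervalIntegrable_const]
  rw [hsub]
  simpa using intervalIntegral.norm_integral_le_of_norm_le_const (a := 0) (b := 1)
    (f := fun s => u ^ s - 1) fun s hs => by
      rw [Set.uIoc_of_le zero_le_one] at hs
      exact abs_rpow_sub_one_le_abs_sub_one hu hs.1.le hs.2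

lemma tendsto_mul_integral_rpow_sub_one {α : Type*} {l : Filter α} {u r : α → ℝ}
    (hu : Tendsto u l (𝓝 1)) (hr : Tendsto (fun a => r a * (u a - 1)) l (𝓝 0)) :
    Tendsto (fun a => r a * ((∫ s in (0 : ℝ)..1, u a ^ s) - 1)) l (𝓝 0) := by
  refine squeeze_zero_norm' ?_ (by simpa using hr.norm)
  filter_upwards [hu.eventually (eventually_gt_nhds one_pos)] with a ha
  rw [Real.norm_eq_abs, abs_mul]
  exact mul_le_mul_of_nonneg_left (abs_integral_rpow_sub_one_le ha) (abs_nonneg _)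

lemma tendsto_mul_inv_mul_add_div_sub {α : Type*} {l : Filter α} {r y I : α → ℝ} {β c : ℝ}
    (hr : ∀ᶠ a in l, r a ≠ 0) (hy : Tendsto y l (𝓝 c)) (hI : Tendsto I l (𝓝 1))
    (hrI : Tendsto (fun a => r a * (I a - 1)) l (𝓝 0)) :
    Tendsto (fun a => r a * (((r a)⁻¹ * y a + β) / I a - β)) l (𝓝 c) := by
  have hlim : Tendsto (fun a => (y a - β * (r a * (I a - 1))) / I a) l (𝓝 c) := by
    have h := (hy.sub (hrI.const_mul β)).div hI one_ne_zero
    rwa [mul_zero, sub_zero, div_one] at h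
  refine hlim.congr' ?_
  filter_upwards [hr, hI.eventually_ne one_ne_zero] with a hra hIa
  field_simp
  ring

lemma tendsto_sqrt_mul_div_rpow_three_halves {x : ℕ → ℝ} {xlim : ℝ}
    (hx : Tendsto x atTop (𝓝 xlim)) :
    Tendsto (fun n : ℕ => (n : ℝ) ^ ((1 : ℝ) / 2) * (x n / (n : ℝ) ^ ((3 : ℝ) / 2)))
      atTop (𝓝 0) := by
  refine (hx.div_atTop tendsto_natCast_atTop_atTop).congr' ?_
  filter_upwards [eventually_gt_atTop 0] with n hn
  have hn : (0 : ℝ) < n := Nat.cast_pos.mpr hn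
  rw [show (3 : ℝ) / 2 = 1 / 2 + 1 by norm_num, rpow_add hn, rpow_one]
  have : (n : ℝ) ^ ((1 : ℝ) / 2) ≠ 0 := (rpow_pos_of_pos hn _).ne'
  field_simp

theorem reparametrized_estimator_limit
    (β : ℝ) (x y : ℕ → ℝ) (xlim ylim : ℝ)
    (hx : Filter.Tendsto x Filter.atTop (nhds xlim))
    (hy : Filter.Tendsto y Filter.atTop (nhds ylim)) :
    (∀ᶠ n : ℕ in Filter.atTop, 0 < 1 + x n / (n : ℝ) ^ ((3 : ℝ) / 2)) ∧
    (∀ᶠ n : ℕ in Filter.atTop,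
      0 < ∫ s in (0 : ℝ)..1, (1 + x n / (n : ℝ) ^ ((3 : ℝ) / 2)) ^ s) ∧
    Filter.Tendsto
      (fun n : ℕ => (n : ℝ) ^ ((1 : ℝ) / 2) *
        (((n : ℝ) ^ (-(1 : ℝ) / 2) * y n + β) /
            (∫ s in (0 : ℝ)..1, (1 + x n / (n : ℝ) ^ ((3 : ℝ) / 2)) ^ s) - β))
      Filter.atTop (nhds ylim) := by
  set u : ℕ → ℝ := fun n => 1 + x n / (n : ℝ) ^ ((3 : ℝ) / 2)
  set I : ℕ → ℝ := fun n => ∫ s in (0 : ℝ)..1, u n ^ s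
  have hu : Tendsto u atTop (𝓝 1) := by
    simpa using (hx.div_atTop ((tendsto_rpow_atTop (by norm_num)).comp
      tendsto_natCast_atTop_atTop)).const_add 1
  have hI : Tendsto I atTop (𝓝 1) := by
    have hu' : Tendsto (fun n => 1 * (u n - 1)) atTop (𝓝 0) := by
      simpa using hu.sub_const 1
    simpa using (tendsto_mul_integral_rpow_sub_one hu hu').add_const 1
  have hrI : Tendsto (fun n : ℕ => (n : ℝ) ^ ((1 : ℝ) / 2) * (I n - 1)) atTop (𝓝 0) :=
    tendsto_mul_integral_rpow_sub_one hu (by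
      simpa [u] using tendsto_sqrt_mul_div_rpow_three_halves hx)
  refine ⟨hu.eventually (eventually_gt_nhds one_pos),
    hI.eventually (eventually_gt_nhds one_pos), ?_⟩
  have hsqrt : ∀ᶠ n : ℕ in atTop, (n : ℝ) ^ ((1 : ℝ) / 2) ≠ 0 := by
    filter_upwards [eventually_gt_atTop 0] with n hn
    exact (rpow_pos_of_pos (Nat.cast_pos.mpr hn) _).ne'
  simpa only [neg_div, rpow_neg (Nat.cast_nonneg _)] using tendsto_mul_inv_mul_add_div_sub hsqrt hy hI hrI
end

section
/- Let (Ω, 𝓕, P) be a probability space with a filtration (𝓕_k)_{k∈ℕ}, and let (M_k)_{k≥1} be a square-integrable martingale difference sequence with respect to (𝓕_k): each M_k is 𝓕_k-measurable and integrable, and E[M_k ∣ 𝓕_{k−1}] = 0 almost surely. Suppose there is a constant V₀ such that E(M_k²) ≤ V₀ for all k ≥ 1. Let β̃ ≥ 0 and define X_0 := 0 and X_k := β̃·k + ∑_{j=1}^{k} M_j for k ≥ 1. Then for every T > 0, sup_{t ∈ [0,T]} | n^{-3} · ∑_{k=1}^{⌊nt⌋} X_{k−1}² − β̃²·t³/3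 | → 0 in probability as n → ∞. -/
open MeasureTheory Filter Finset Topology

/-!
With `S k = M 1 + ⋯ + M k`, the sum `∑_{k < ⌊nt⌋} X_k²` splits into `β² ∑ k²`, which is
`(nt)³/3` up to `2(nt)²`, and a remainder bounded uniformly in `t ∈ [0, T]` by
`R_n = ∑_{k < ⌊nT⌋} |2βk S_k + S_k²|`. Orthogonality of martingale differences gives
`E S_k² ≤ k V₀`, and `2|k S_k| ≤ k²/√n + √n S_k²` then gives `E R_n = O(n^{5/2})`.
So the supremum is dominated by an integrable `W_n` with `E W_n → 0`, and Markov's inequality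
yields convergence in probability without needing measurability of the supremum.
-/

lemma abs_sum_range_sq_sub_cube_div_three_le (m : ℕ) :
    |∑ k ∈ range m, (k : ℝ) ^ 2 - (m : ℝ) ^ 3 / 3| ≤ (m : ℝ) ^ 2 := by
  induction m with
  | zero => simp
  | succ m ih =>
    rw [sum_range_succ]
    push_cast
    rw [abs_le] at ih ⊢
    constructor <;> nlinarith [ih.1, ih.2, Nat.cast_nonneg (α := ℝ) m]

lemma abs_sum_range_floor_sq_sub_cube_div_three_le {x : ℝ} (hx : 0 ≤ x) :
    |∑ k ∈ range ⌊x⌋₊, (k : ℝ) ^ 2 - x ^ 3 / 3| ≤ 2 * x ^ 2 := by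
  set m : ℝ := (⌊x⌋₊ : ℝ)
  have hm0 : 0 ≤ m := Nat.cast_nonneg _
  have hmx : m ≤ x := Nat.floor_le hx
  have hxm : x < m + 1 := Nat.lt_floor_add_one x
  have hcube : |m ^ 3 / 3 - x ^ 3 / 3| ≤ x ^ 2 := by
    have hle : m ^ 3 ≤ x ^ 3 := pow_le_pow_left₀ hm0 hmx 3
    have hfactor : x ^ 3 - m ^ 3 = (x - m) * (x ^ 2 + x * m + m ^ 2) := by ring
    have hquad : x ^ 2 + x * m + m ^ 2 ≤ 3 * x ^ 2 := by nlinarith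
    have : (x - m) * (x ^ 2 + x * m + m ^ 2) ≤ 1 * (3 * x ^ 2) :=
      mul_le_mul (by linarith) hquad (by positivity) zero_le_one
    rw [abs_of_nonpos (by linarith)]
    linarith
  calc |∑ k ∈ range ⌊x⌋₊, (k : ℝ) ^ 2 - x ^ 3 / 3|
      ≤ |∑ k ∈ range ⌊x⌋₊, (k : ℝ) ^ 2 - m ^ 3 / 3| + |m ^ 3 / 3 - x ^ 3 / 3| := abs_sub_le _ _ _
    _ ≤ m ^ 2 + x ^ 2 := add_le_add (abs_sum_range_sq_sub_cube_div_three_le _) hcube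
    _ ≤ 2 * x ^ 2 := by nlinarith

lemma abs_two_mul_mul_add_sq_le (β k s : ℝ) {c : ℝ} (hc : 0 < c) :
    |2 * β * k * s + s ^ 2| ≤ |β| * (k ^ 2 / c + c * s ^ 2) + s ^ 2 := by
  have amgm : 2 * |k| * |s| ≤ k ^ 2 / c + c * s ^ 2 := by
    rw [div_add' _ _ _ hc.ne', le_div_iff₀ hc]
    have := sq_nonneg (|k| - c * |s|)
    rw [sub_sq, mul_pow, sq_abs, sq_abs] at this
    linarith
  calc |2 * β * k * s + s ^ 2| ≤ |β| * (2 * |k| * |s|) + s ^ 2 := by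
        refine (abs_add_le _ _).trans (le_of_eq ?_)
        rw [abs_of_nonneg (sq_nonneg s), abs_mul, abs_mul, abs_mul, abs_two]
        ring
    _ ≤ |β| * (k ^ 2 / c + c * s ^ 2) + s ^ 2 := by gcongr

lemma iSup_abs_sum_sq_div_cube_sub_le (β T : ℝ) (s : ℕ → ℝ) {n : ℝ} (hn : 0 < n) :
    ⨆ t : Set.Icc (0 : ℝ) T,
        |(∑ k ∈ range ⌊n * t⌋₊, (β * k + s k) ^ 2) / n ^ 3 - β ^ 2 * (t : ℝ) ^ 3 / 3|
      ≤ 2 * β ^ 2 * T ^ 2 / n + (∑ k ∈ range ⌊n * T⌋₊, |2 * β * k * s k + s k ^ 2|) / n ^ 3 := by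
  refine Real.iSup_le (fun ⟨t, ht0, htT⟩ => ?_) (by positivity)
  have hnt : 0 ≤ n * t := by positivity
  have split : (∑ k ∈ range ⌊n * t⌋₊, (β * k + s k) ^ 2) / n ^ 3 - β ^ 2 * t ^ 3 / 3
      = β ^ 2 * (∑ k ∈ range ⌊n * t⌋₊, (k : ℝ) ^ 2 - (n * t) ^ 3 / 3) / n ^ 3
        + (∑ k ∈ range ⌊n * t⌋₊, (2 * β * k * s k + s k ^ 2)) / n ^ 3 := by
    have expand : ∑ k ∈ range ⌊n * t⌋₊, (β * k + s k) ^ 2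
        = β ^ 2 * ∑ k ∈ range ⌊n * t⌋₊, (k : ℝ) ^ 2
          + ∑ k ∈ range ⌊n * t⌋₊, (2 * β * k * s k + s k ^ 2) := by
      rw [mul_sum, ← sum_add_distrib]
      exact sum_congr rfl fun k _ => by ring
    rw [expand]
    field_simp
    ring
  have main : |β ^ 2 * (∑ k ∈ range ⌊n * t⌋₊, (k : ℝ) ^ 2 - (n * t) ^ 3 / 3) / n ^ 3|
      ≤ 2 * β ^ 2 * T ^ 2 / n := by
    rw [abs_div, abs_mul, abs_of_nonneg (sq_nonneg β), abs_of_pos (pow_pos hn 3),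
      div_le_div_iff₀ (by positivity) hn]
    calc β ^ 2 * |∑ k ∈ range ⌊n * t⌋₊, (k : ℝ) ^ 2 - (n * t) ^ 3 / 3| * n
        ≤ β ^ 2 * (2 * (n * t) ^ 2) * n := by
          gcongr; exact abs_sum_range_floor_sq_sub_cube_div_three_le hnt
      _ ≤ 2 * β ^ 2 * T ^ 2 * n ^ 3 := by
          have : t ^ 2 ≤ T ^ 2 := by gcongr
          nlinarith [mul_le_mul_of_nonneg_left this (by positivity : 0 ≤ β ^ 2 * n ^ 3)]
  have rem : |∑ k ∈ range ⌊n * t⌋₊, (2 * β * k * s k + s k ^ 2)|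
      ≤ ∑ k ∈ range ⌊n * T⌋₊, |2 * β * k * s k + s k ^ 2| :=
    (abs_sum_le_sum_abs _ _).trans <| sum_le_sum_of_subset_of_nonneg
      (range_subset_range.2 (Nat.floor_le_floor (by gcongr))) fun _ _ _ => abs_nonneg _
  rw [split]
  refine (abs_add_le _ _).trans (add_le_add main ?_)
  rw [abs_div, abs_of_pos (pow_pos hn 3)]
  gcongr

lemma tendstoInMeasure_zero_of_abs_le_of_integral_tendsto_zero {α ι : Type*}
    {mα : MeasurableSpace α} {μ : Measure α} [IsFiniteMeasure μ] {l : Filter ι}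
    {Y W : ι → α → ℝ} (hW : ∀ i, Integrable (W i) μ) (hYW : ∀ᶠ i in l, ∀ a, |Y i a| ≤ W i a)
    (hlim : Tendsto (fun i => ∫ a, W i a ∂μ) l (𝓝 0)) :
    TendstoInMeasure μ Y l (fun _ => 0) := by
  refine tendstoInMeasure_iff_dist.2 fun ε hε => ?_
  have hbound : Tendsto (fun i => ENNReal.ofReal (ε⁻¹ * ∫ a, W i a ∂μ)) l (𝓝 0) := by
    simpa using ENNReal.tendsto_ofReal (hlim.const_mul ε⁻¹)
  refine tendsto_of_tendsto_of_tendsto_of_le_of_le' tendsto_const_nhds hbound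
    (Eventually.of_forall fun _ => zero_le) ?_
  filter_upwards [hYW] with i hi
  have markov : ε * μ.real {a | ε ≤ W i a} ≤ ∫ a, W i a ∂μ :=
    mul_meas_ge_le_integral_of_nonneg
      (Eventually.of_forall fun a => (abs_nonneg _).trans (hi a)) (hW i) ε
  calc μ {a | ε ≤ dist (Y i a) 0} ≤ μ {a | ε ≤ W i a} :=
        measure_mono fun a ha => le_trans (by simpa [Real.dist_eq] using ha) (hi a)
    _ = ENNReal.ofReal (μ.real {a | ε ≤ W i a}) := (ofReal_measureReal (measure_ne_top _ _)).symm
    _ ≤ ENNReal.ofReal (ε⁻¹ * ∫ a, W i a ∂μ) := by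
        gcongr
        rwa [le_inv_mul_iff₀ hε]

section MartingaleDifference

variable {Ω : Type*} {mΩ : MeasurableSpace Ω} {μ : Measure Ω} [IsFiniteMeasure μ]

lemma integral_mul_eq_zero_of_condExp_eq_zero {m : MeasurableSpace Ω} (hm : m ≤ mΩ)
    {f g : Ω → ℝ} (hf : StronglyMeasurable[m] f) (hfL2 : MemLp f 2 μ) (hgL2 : MemLp g 2 μ)
    (hg : μ[g | m] =ᵐ[μ] 0) :
    ∫ ω, f ω * g ω ∂μ = 0 := by
  have pull_out : μ[f * g | m] =ᵐ[μ] f * μ[g | m] :=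
    condExp_mul_of_stronglyMeasurable_left hf (hfL2.integrable_mul hgL2)
      (hgL2.integrable one_le_two)
  calc ∫ ω, f ω * g ω ∂μ = ∫ ω, (μ[f * g | m]) ω ∂μ := (integral_condExp hm).symm
    _ = ∫ _, (0 : ℝ) ∂μ :=
        integral_congr_ae (pull_out.trans (hg.mono fun ω hω => by simp [hω]))
    _ = 0 := integral_zero _ _

lemma integral_sq_sum_eq_sum_integral_sq (𝓕 : Filtration ℕ mΩ) {M : ℕ → Ω → ℝ} {s : Finset ℕ}
    (hmeas : ∀ k ∈ s, StronglyMeasurable[𝓕 k] (M k)) (hL2 : ∀ k ∈ s, MemLp (M k) 2 μ)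
    (hmd : ∀ k ∈ s, μ[M k | 𝓕 (k - 1)] =ᵐ[μ] 0) :
    ∫ ω, (∑ k ∈ s, M k ω) ^ 2 ∂μ = ∑ k ∈ s, ∫ ω, M k ω ^ 2 ∂μ := by
  have hint : ∀ i ∈ s, ∀ j ∈ s, Integrable (fun ω => M i ω * M j ω) μ :=
    fun i hi j hj => (hL2 i hi).integrable_mul (hL2 j hj)
  have orth : ∀ i ∈ s, ∀ j ∈ s, i < j → ∫ ω, M i ω * M j ω ∂μ = 0 := fun i hi j hj hij =>
    integral_mul_eq_zero_of_condExp_eq_zero (𝓕.le _)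
      ((hmeas i hi).mono (𝓕.mono (Nat.le_sub_one_of_lt hij))) (hL2 i hi) (hL2 j hj) (hmd j hj)
  simp_rw [sq, sum_mul_sum]
  rw [integral_finsetSum _ fun i hi => integrable_finsetSum _ (hint i hi)]
  refine sum_congr rfl fun i hi => ?_
  rw [integral_finsetSum _ (hint i hi), sum_eq_single_of_mem i hi]
  intro j hj hji
  rcases hji.lt_or_gt with hji | hij
  · simp_rw [mul_comm (M i _)]
    exact orth j hj i hi hji
  · exact orth i hi j hj hij

end MartingaleDifference

lemma integrable_abs_two_mul_mul_add_sq {Ω : Type*} {mΩ : MeasurableSpace Ω}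
    {μ : Measure Ω} [IsFiniteMeasure μ] (β k : ℝ) {S : Ω → ℝ} (hS : MemLp S 2 μ) :
    Integrable (fun ω => |2 * β * k * S ω + S ω ^ 2|) μ :=
  (((hS.integrable one_le_two).const_mul (2 * β * k)).add hS.integrable_sq).abs

lemma integral_sum_abs_two_mul_mul_add_sq_le {Ω : Type*} {mΩ : MeasurableSpace Ω}
    {μ : Measure Ω} [IsProbabilityMeasure μ] (β : ℝ) {T V : ℝ} (hT : 0 ≤ T) (hV : 0 ≤ V)
    {S : ℕ → Ω → ℝ} (hL2 : ∀ k, MemLp (S k) 2 μ) (hS : ∀ k : ℕ, ∫ ω, S k ω ^ 2 ∂μ ≤ k * V)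
    {n : ℝ} (hn : 0 < n) :
    ∫ ω, ∑ k ∈ range ⌊n * T⌋₊, |2 * β * k * S k ω + S k ω ^ 2| ∂μ
      ≤ n * T * (|β| * (n * T) ^ 2 / √n + (|β| * √n + 1) * (n * T * V)) := by
  have hsn : 0 < √n := Real.sqrt_pos.2 hn
  have hnT : 0 ≤ n * T := by positivity
  have hint : ∀ k : ℕ, Integrable (fun ω => |2 * β * k * S k ω + S k ω ^ 2|) μ := fun k =>
    integrable_abs_two_mul_mul_add_sq β k (hL2 k)
  have term : ∀ k ∈ range ⌊n * T⌋₊, ∫ ω, |2 * β * k * S k ω + S k ω ^ 2| ∂μ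
      ≤ |β| * (n * T) ^ 2 / √n + (|β| * √n + 1) * (n * T * V) := by
    intro k hk
    have hk : (k : ℝ) ≤ n * T :=
      (Nat.cast_le.2 (mem_range.1 hk).le).trans (Nat.floor_le hnT)
    have hSk : ∫ ω, S k ω ^ 2 ∂μ ≤ n * T * V := (hS k).trans (by gcongr)
    have hSk_int := (hL2 k).integrable_sq
    calc ∫ ω, |2 * β * k * S k ω + S k ω ^ 2| ∂μ
        ≤ ∫ ω, |β| * (k : ℝ) ^ 2 / √n + (|β| * √n + 1) * S k ω ^ 2 ∂μ :=
          integral_mono (hint k) ((integrable_const _).add (hSk_int.const_mul _))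
            fun ω => (abs_two_mul_mul_add_sq_le β k (S k ω) hsn).trans_eq (by ring)
      _ = |β| * (k : ℝ) ^ 2 / √n + (|β| * √n + 1) * ∫ ω, S k ω ^ 2 ∂μ := by
          rw [integral_add (integrable_const _) (hSk_int.const_mul _), integral_const,
            integral_const_mul]
          simp
      _ ≤ |β| * (n * T) ^ 2 / √n + (|β| * √n + 1) * (n * T * V) := by gcongr
  calc ∫ ω, ∑ k ∈ range ⌊n * T⌋₊, |2 * β * k * S k ω + S k ω ^ 2| ∂μ
      = ∑ k ∈ range ⌊n * T⌋₊, ∫ ω, |2 * β * k * S k ω + S k ω ^ 2| ∂μ :=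
        integral_finsetSum _ fun k _ => hint k
    _ ≤ ⌊n * T⌋₊ * (|β| * (n * T) ^ 2 / √n + (|β| * √n + 1) * (n * T * V)) :=
        (sum_le_card_nsmul _ _ _ term).trans_eq (by rw [card_range, nsmul_eq_mul])
    _ ≤ n * T * (|β| * (n * T) ^ 2 / √n + (|β| * √n + 1) * (n * T * V)) := by
        gcongr
        exact Nat.floor_le hnT

lemma tendsto_error_bound (β T V : ℝ) :
    Tendsto (fun n : ℝ => 2 * β ^ 2 * T ^ 2 / n
      + n * T * (|β| * (n * T) ^ 2 / √n + (|β| * √n + 1) * (n * T * V)) / n ^ 3)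
      atTop (𝓝 0) := by
  have hinv : Tendsto (fun n : ℝ => n⁻¹) atTop (𝓝 0) := tendsto_inv_atTop_zero
  have hinv_sqrt : Tendsto (fun n : ℝ => (√n)⁻¹) atTop (𝓝 0) :=
    tendsto_inv_atTop_zero.comp (tendsto_rpow_atTop (by norm_num : (0 : ℝ) < 1 / 2)
      |>.congr fun x => (Real.sqrt_eq_rpow x).symm)
  have hsum := (hinv.const_mul (2 * β ^ 2 * T ^ 2 + T ^ 2 * V)).add
    (hinv_sqrt.const_mul (|β| * T ^ 3 + |β| * T ^ 2 * V))
  rw [mul_zero, mul_zero, add_zero] at hsum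
  refine hsum.congr' ?_
  filter_upwards [eventually_gt_atTop 0] with n hn
  have hsq : n = √n * √n := (Real.mul_self_sqrt hn.le).symm
  have hsn : 0 < √n := Real.sqrt_pos.2 hn
  generalize √n = s at hsq hsn ⊢
  subst hsq
  field_simp
  ring

theorem lln_second_moment_pure_immigration_general
    {Ω : Type*} {mΩ : MeasurableSpace Ω} (μ : Measure Ω)
    [IsProbabilityMeasure μ] (𝓕 : Filtration ℕ mΩ) (M : ℕ → Ω → ℝ)
    (hmeas : ∀ k, 1 ≤ k → StronglyMeasurable[𝓕 k] (M k))
    (hL2 : ∀ k, 1 ≤ k → MemLp (M k) 2 μ)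
    (hmd : ∀ k, 1 ≤ k → μ[M k | 𝓕 (k - 1)] =ᵐ[μ] 0)
    (V₀ : ℝ) (hV : ∀ k, 1 ≤ k → ∫ ω, (M k ω) ^ 2 ∂μ ≤ V₀)
    (β : ℝ) (X : ℕ → Ω → ℝ)
    (hX : ∀ k ω, X k ω = β * k + ∑ j ∈ Finset.Icc 1 k, M j ω)
    (T : ℝ) (hT : 0 < T) :
    TendstoInMeasure μ
      (fun n ω => ⨆ t : Set.Icc (0 : ℝ) T,
        |(∑ k ∈ Finset.range ⌊(n : ℝ) * (t : ℝ)⌋₊, (X k ω) ^ 2) / (n : ℝ) ^ 3 -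
          β ^ 2 * (t : ℝ) ^ 3 / 3|)
      Filter.atTop (fun _ => (0 : ℝ)) := by
  set S : ℕ → Ω → ℝ := fun k ω => ∑ j ∈ Icc 1 k, M j ω
  have hpos : ∀ k, ∀ j ∈ Icc 1 k, 1 ≤ j := fun _ _ hj => (mem_Icc.1 hj).1
  have hSL2 : ∀ k, MemLp (S k) 2 μ := fun k =>
    memLp_finsetSum _ fun j hj => hL2 j (hpos k j hj)
  have hS2 : ∀ k : ℕ, ∫ ω, S k ω ^ 2 ∂μ ≤ k * V₀ := fun k => by
    rw [integral_sq_sum_eq_sum_integral_sq 𝓕 (fun j hj => hmeas j (hpos k j hj))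
      (fun j hj => hL2 j (hpos k j hj)) (fun j hj => hmd j (hpos k j hj))]
    simpa using sum_le_card_nsmul _ _ _ fun j hj => hV j (hpos k j hj)
  have hV₀ : 0 ≤ V₀ := (integral_nonneg fun ω => sq_nonneg _).trans (hV 1 le_rfl)
  set R : ℝ → Ω → ℝ := fun n ω => ∑ k ∈ range ⌊n * T⌋₊, |2 * β * k * S k ω + S k ω ^ 2|
  have hR : ∀ n, Integrable (R n) μ := fun n =>
    integrable_finsetSum _ fun k _ => integrable_abs_two_mul_mul_add_sq β k (hSL2 k)
  refine tendstoInMeasure_zero_of_abs_le_of_integral_tendsto_zero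
    (W := fun n ω => 2 * β ^ 2 * T ^ 2 / n + R n ω / n ^ 3)
    (fun n => (integrable_const _).add ((hR n).div_const _)) ?_ ?_
  · filter_upwards [eventually_gt_atTop 0] with n hn ω
    rw [abs_of_nonneg (Real.iSup_nonneg fun _ => abs_nonneg _)]
    simpa only [hX] using iSup_abs_sum_sq_div_cube_sub_le β T (fun k => S k ω) hn
  refine tendsto_of_tendsto_of_tendsto_of_le_of_le' tendsto_const_nhds
    (tendsto_error_bound β T V₀) ?_ ?_ <;> filter_upwards [eventually_gt_atTop 0] with n hn
  · exact integral_nonneg fun ω => by positivity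
  · rw [integral_add (integrable_const _) ((hR n).div_const _), integral_const, integral_div]
    simp only [probReal_univ, one_smul]
    gcongr
    exact integral_sum_abs_two_mul_mul_add_sq_le β hT.le hV₀ hSL2 hS2 hn

theorem lln_second_moment_pure_immigration
    {Ω : Type*} {mΩ : MeasurableSpace Ω} (μ : Measure Ω)
    [IsProbabilityMeasure μ] (𝓕 : Filtration ℕ mΩ) (M : ℕ → Ω → ℝ)
    (hmeas : ∀ k, 1 ≤ k → StronglyMeasurable[𝓕 k] (M k))
    (hint : ∀ k, 1 ≤ k → Integrable (M k) μ)
    (hL2 : ∀ k, 1 ≤ k → MemLp (M k) 2 μ)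
    (hmd : ∀ k, 1 ≤ k → μ[M k | 𝓕 (k - 1)] =ᵐ[μ] 0)
    (V₀ : ℝ) (hV : ∀ k, 1 ≤ k → ∫ ω, (M k ω) ^ 2 ∂μ ≤ V₀)
    (β : ℝ) (hβ : 0 ≤ β) (X : ℕ → Ω → ℝ)
    (hX : ∀ k ω, X k ω = β * k + ∑ j ∈ Finset.Icc 1 k, M j ω)
    (T : ℝ) (hT : 0 < T) :
    TendstoInMeasure μ
      (fun n ω => ⨆ t : Set.Icc (0 : ℝ) T,
        |(∑ k ∈ Finset.range ⌊(n : ℝ) * (t : ℝ)⌋₊, (X k ω) ^ 2) / (n : ℝ) ^ 3 -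
          β ^ 2 * (t : ℝ) ^ 3 / 3|)
      Filter.atTop (fun _ => (0 : ℝ)) :=
  lln_second_moment_pure_immigration_general μ 𝓕 M hmeas hL2 hmd V₀ hV β X hX T hT
end
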